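/- Every connected finite simple graph G with independence number α(G) ≤ 3 has a Gallai vertex, i.e., a vertex contained in every longest path of G. Equivalently, 4P1 is a fixer: every connected 4P1-free graph has a Gallai vertex. -/

import Mathlib

/-!
Let `s` be a longest path, with ends `x` and `y`, and let `K` be the set of vertices off `s`.
If `K` is empty, every longest path is Hamiltonian. Otherwise no vertex of `K` is adjacent to `x`
or `y`, and `x` is not adjacent to `y`, since a cycle on the vertices of `s` would extend to a
longer path. As `α(G) ≤ 3`, `K` is therefore a clique, and each vertex of `G` is adjacent to `x`,
`y` or any given `w ∈ K`. If `w ∈ K` is adjacent to `u ∈ s`, Pósa rotations show that `x` has no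
neighbour on `s` after `u`, and `y` none before `u`. Hence two edges from `K` to distinct vertices
`u, u'` of `s` are impossible: when `u, u'` are consecutive the edges give a detour through `K`,
and otherwise the vertex just before `u'` would be adjacent to none of `x`, `y` and the end in `K`
of the second edge. So all edges between `K` and `s` end at a single vertex `c`. A longest path
avoiding `c` stays inside `K` or inside `s - c`, and both are too small.
-/

open SimpleGraph

def IsLongestPath {V : Type} (G : SimpleGraph V) {u v : V} (p : G.Walk u v) : Prop :=
  p.IsPath ∧ ∀ (a b : V) (q : G.Walk a b), q.IsPath → q.length ≤ p.length

section

variable {V : Type*} {G : SimpleGraph V}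

lemma SimpleGraph.Connected.exists_adj_notMem_mem {S : Set V} {w z : V} (hconn : G.Connected)
    (hw : w ∉ S) (hz : z ∈ S) : ∃ a ∉ S, ∃ b ∈ S, G.Adj a b := by
  obtain ⟨d, -, hd₁, hd₂⟩ := (hconn.preconnected w z).some.exists_boundary_dart Sᶜ hw (by simpa)
  exact ⟨d.fst, hd₁, d.snd, by simpa using hd₂, d.adj⟩

lemma SimpleGraph.indepSetFree_of_card_le {n : ℕ}
    (h : ∀ t : Finset V, (∀ a ∈ t, ∀ b ∈ t, a ≠ b → ¬ G.Adj a b) → t.card ≤ n) :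
    G.IndepSetFree (n + 1) := fun t ht => by
  have := h t fun a ha b hb hab => ht.isIndepSet ha hb hab
  have := ht.card_eq
  omega

lemma SimpleGraph.IndepSetFree.adj_of_four {a b c d : V} (h4 : G.IndepSetFree 4)
    (hab : a ≠ b) (hac : a ≠ c) (had : a ≠ d) (hbc : b ≠ c) (hbd : b ≠ d) (hcd : c ≠ d) :
    G.Adj a b ∨ G.Adj a c ∨ G.Adj a d ∨ G.Adj b c ∨ G.Adj b d ∨ G.Adj c d := by
  classical
  by_contra! h
  refine h4 {a, b, c, d} ⟨?_, Finset.card_eq_four.2 ⟨a, b, c, d, hab, hac, had, hbc, hbd, hcd, rfl⟩⟩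
  simp [isIndepSet_iff, Set.pairwise_insert, G.adj_comm, h]

lemma List.Nodup.ne_of_mem_of_head?_eq {s l₁ l₂ : List V} {x z : V} (hnd : s.Nodup)
    (hsplit : s = l₁ ++ l₂) (hl₁ : l₁ ≠ []) (hx : s.head? = some x) (hz : z ∈ l₂) : z ≠ x := by
  subst hsplit
  rw [List.head?_append_of_ne_nil _ hl₁] at hx
  exact fun hzx => List.disjoint_of_nodup_append hnd (List.mem_of_mem_head? hx) (hzx ▸ hz)

lemma List.Nodup.ne_of_mem_of_getLast?_eq {s l₁ l₂ : List V} {y z : V} (hnd : s.Nodup)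
    (hsplit : s = l₁ ++ l₂) (hl₂ : l₂ ≠ []) (hy : s.getLast? = some y) (hz : z ∈ l₁) : z ≠ y :=
  (List.nodup_reverse.2 hnd).ne_of_mem_of_head?_eq (l₁ := l₂.reverse) (l₂ := l₁.reverse)
    (by simp [hsplit]) (by simpa using hl₂) (by simpa using hy) (by simpa using hz)

variable {s t l l₁ l₂ m L : List V} {u u' w w' x y z c : V}

/-- A path of `G` given by its list of vertices, which makes cutting and regluing paths easy. -/
def IsPathList (G : SimpleGraph V) (l : List V) : Prop :=
  l.Nodup ∧ l.IsChain G.Adj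

def IsLongestPathList (G : SimpleGraph V) (s : List V) : Prop :=
  IsPathList G s ∧ ∀ l, IsPathList G l → l.length ≤ s.length

namespace IsPathList

lemma reverse (h : IsPathList G l) : IsPathList G l.reverse :=
  ⟨List.nodup_reverse.2 h.1, List.isChain_reverse.2 (h.2.imp fun _ _ hab => hab.symm)⟩

lemma reverse_append (h : IsPathList G (l₁ ++ l₂))
    (hadj : ∀ a ∈ l₁.head?, ∀ b ∈ l₂.head?, G.Adj a b) : IsPathList G (l₁.reverse ++ l₂) := by
  obtain ⟨hnd, hch⟩ := h
  obtain ⟨hch₁, hch₂, -⟩ := List.isChain_append.1 hch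
  refine ⟨((List.reverse_perm l₁).append_right l₂).nodup_iff.2 hnd, List.isChain_append.2
    ⟨(reverse ⟨(List.nodup_append.1 hnd).1, hch₁⟩).2, hch₂, by simpa using hadj⟩⟩

lemma append_comm (h : IsPathList G (l₁ ++ l₂))
    (hadj : ∀ a ∈ l₂.getLast?, ∀ b ∈ l₁.head?, G.Adj a b) : IsPathList G (l₂ ++ l₁) := by
  obtain ⟨hnd, hch⟩ := h
  obtain ⟨hch₁, hch₂, -⟩ := List.isChain_append.1 hch
  exact ⟨List.perm_append_comm.nodup_iff.1 hnd, List.isChain_append.2 ⟨hch₂, hch₁, hadj⟩⟩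

end IsPathList

lemma exists_isLongestPathList [Fintype V] (G : SimpleGraph V) : ∃ s, IsLongestPathList G s := by
  classical
  obtain ⟨s, hs, hlen⟩ := Nat.findGreatest_spec (P := fun n => ∃ l, IsPathList G l ∧ l.length = n)
    (Nat.zero_le (Fintype.card V)) ⟨[], by simp [IsPathList], rfl⟩
  exact ⟨s, hs, fun l hl => hlen ▸ Nat.le_findGreatest hl.1.length_le_card ⟨l, hl, rfl⟩⟩

namespace IsLongestPathList

lemma of_isPathList (hs : IsLongestPathList G s) (hl : IsPathList G l)
    (hlen : l.length = s.length) : IsLongestPathList G l :=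
  ⟨hl, fun l' hl' => hlen ▸ hs.2 l' hl'⟩

lemma reverse (hs : IsLongestPathList G s) : IsLongestPathList G s.reverse :=
  hs.of_isPathList hs.1.reverse s.length_reverse

lemma not_adj_head (hs : IsLongestPathList G s) (hw : w ∉ s) (hx : s.head? = some x) :
    ¬ G.Adj w x := by
  obtain ⟨t, rfl⟩ := List.head?_eq_some_iff.1 hx
  intro hwx
  have := hs.2 (w :: x :: t) ⟨List.nodup_cons.2 ⟨hw, hs.1.1⟩, hs.1.2.cons_cons hwx⟩
  simp at this

lemma not_adj_getLast (hs : IsLongestPathList G s) (hw : w ∉ s) (hy : s.getLast? = some y) :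
    ¬ G.Adj w y :=
  hs.reverse.not_adj_head (by simpa using hw) (by simpa using hy)

/-- Pósa rotation. -/
lemma rotate (hs : IsLongestPathList G (l₁ ++ u :: u' :: l₂))
    (hx : (l₁ ++ u :: u' :: l₂).head? = some x) (hxu' : G.Adj x u') :
    IsLongestPathList G (u :: (l₁.reverse ++ u' :: l₂)) := by
  have h := IsPathList.reverse_append (l₁ := l₁ ++ [u]) (l₂ := u' :: l₂) (by simpa using hs.1)
    (by cases l₁ <;> simp_all)
  exact hs.of_isPathList (by simpa using h) (by simp; omega)

lemma not_adj_head_getLast (hconn : G.Connected) (hs : IsLongestPathList G s) (hw : w ∉ s)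
    (hx : s.head? = some x) (hy : s.getLast? = some y) : ¬ G.Adj x y := by
  obtain ⟨a, ha, b, hb, hab⟩ :=
    hconn.exists_adj_notMem_mem (S := {a | a ∈ s}) hw (List.mem_of_mem_head? hx)
  obtain ⟨l₁, l₂, rfl⟩ := List.append_of_mem hb
  intro hxy
  have hcyc : ∀ c ∈ (b :: l₂).getLast?, ∀ d ∈ l₁.head?, G.Adj c d := by
    rw [List.getLast?_append_of_ne_nil _ (List.cons_ne_nil _ _)] at hy
    cases l₁ <;> simp_all [hxy.symm]
  have hrot := hs.of_isPathList (hs.1.append_comm hcyc) (by simp; omega)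
  exact hrot.not_adj_head (by simp at ha ⊢; tauto) rfl hab

lemma head_ne_getLast (hconn : G.Connected) (hs : IsLongestPathList G s) (hw : w ∉ s)
    (hx : s.head? = some x) (hy : s.getLast? = some y) : x ≠ y := by
  obtain ⟨a, ha, b, hb, hab⟩ :=
    hconn.exists_adj_notMem_mem (S := {a | a ∈ s}) hw (List.mem_of_mem_head? hx)
  have h2 := hs.2 [a, b] ⟨by simp [hab.ne], List.isChain_pair.2 hab⟩
  obtain ⟨t, rfl⟩ := List.head?_eq_some_iff.1 hx
  rintro rfl
  cases t with
  | nil => simp at h2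
  | cons c t =>
    simp only [List.getLast?_cons_cons] at hy
    exact (List.nodup_cons.1 hs.1.1).1 (List.mem_of_mem_getLast? hy)

lemma not_adj_of_adj_head (hs : IsLongestPathList G s) (hsplit : s = l₁ ++ u :: u' :: l₂)
    (hx : s.head? = some x) (hxu' : G.Adj x u') (hw : w ∉ s) : ¬ G.Adj w u := by
  subst hsplit
  exact (hs.rotate hx hxu').not_adj_head (by simp at hw ⊢; tauto) rfl

lemma not_adj_getLast_of_adj_head (hconn : G.Connected) (hs : IsLongestPathList G s)
    (hsplit : s = l₁ ++ u :: u' :: l₂) (hx : s.head? = some x) (hy : s.getLast? = some y)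
    (hxu' : G.Adj x u') (hw : w ∉ s) : ¬ G.Adj u y := by
  subst hsplit
  refine (hs.rotate hx hxu').not_adj_head_getLast hconn (w := w) (by simp at hw ⊢; tauto) rfl ?_
  rw [← List.cons_append, List.getLast?_append_of_ne_nil _ (List.cons_ne_nil _ _)]
  simpa [List.getLast?_append] using hy

lemma eq_nil_of_isPathList (hs : IsLongestPathList G (l₁ ++ u :: u' :: l₂)) (hL : IsPathList G L)
    (hu : ∀ a ∈ L.head?, G.Adj u a) (hu' : ∀ a ∈ L.getLast?, G.Adj a u')
    (hdisj : ∀ a ∈ L, a ∉ l₁ ++ u :: u' :: l₂) : L = [] := by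
  classical
  by_contra hne
  have hnd : (l₁ ++ u :: L ++ u' :: l₂).Nodup := by
    have : (L ++ (l₁ ++ u :: u' :: l₂)).Nodup :=
      List.nodup_append.2 ⟨hL.1, hs.1.1, fun a ha b hb hab => hdisj a ha (hab ▸ hb)⟩
    exact (List.perm_iff_count.2 fun a => by
      simp [List.count_append, List.count_cons]; omega).nodup_iff.1 this
  have hch : (l₁ ++ u :: L ++ u' :: l₂).IsChain G.Adj := by
    have h₁ : (l₁ ++ [u]).IsChain G.Adj := hs.1.2.prefix ⟨u' :: l₂, by simp⟩
    have h₂ : (u :: L ++ [u']).IsChain G.Adj :=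
      List.isChain_append.2 ⟨List.isChain_cons.2 ⟨hu, hL.2⟩, List.isChain_singleton _,
        fun a ha b hb => by
          cases L with
          | nil => exact absurd rfl hne
          | cons c L => simp_all⟩
    have h₃ : ([u'] ++ l₂).IsChain G.Adj := hs.1.2.suffix ⟨l₁ ++ [u], by simp⟩
    simpa using h₁.append_overlap (l₃ := L ++ [u'] ++ l₂)
      (by simpa using h₂.append_overlap h₃ (List.cons_ne_nil _ _)) (List.cons_ne_nil _ _)
  exact hne (by simpa using hs.2 _ ⟨hnd, hch⟩)

/-- A longest path avoiding `c` cannot cross from one side of the cut vertex `c` to the other. -/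
lemma mem_of_forall_adj_eq (hs : IsLongestPathList G s) (hc : c ∈ s)
    (hcut : ∀ a ∉ s, ∀ b ∈ s, G.Adj a b → b = c)
    (hK : ∀ l, IsPathList G l → (∀ a ∈ l, a ∉ s) → l.length < s.length)
    (ht : IsLongestPathList G t) : c ∈ t := by
  classical
  by_contra hct
  have hlen : t.length = s.length := le_antisymm (hs.2 t ht.1) (ht.2 s hs.1)
  obtain ⟨a, t', rfl⟩ := List.exists_cons_of_length_pos (hlen ▸ List.length_pos_of_mem hc)
  have hside : ∀ z ∈ a :: t', (z ∈ s ↔ a ∈ s) := by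
    refine List.IsChain.induction (fun z => z ∈ s ↔ a ∈ s) _ (List.IsChain.iff_mem.1 ht.1.2) ?_
      (by simp)
    rintro p q ⟨hp, hq, hpq⟩ hpa
    rw [← hpa]
    constructor
    · intro hqs
      by_contra hps
      exact hct (hcut p hps q hqs hpq ▸ hq)
    · intro hps
      by_contra hqs
      exact hct (hcut q hqs p hps hpq.symm ▸ hp)
  by_cases ha : a ∈ s
  · have hsub : a :: t' ⊆ s.erase c := fun z hz =>
      (List.mem_erase_of_ne (by rintro rfl; exact hct hz)).2 ((hside z hz).2 ha)
    have := ht.1.1.length_le_of_subset hsub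
    rw [List.length_erase_of_mem hc] at this
    have := List.length_pos_of_mem hc
    omega
  · exact (hK _ ht.1 fun z hz hzs => ha ((hside z hz).1 hzs)).ne hlen

lemma adj_or_adj_or_adj (h4 : G.IndepSetFree 4) (hconn : G.Connected)
    (hs : IsLongestPathList G s) (hx : s.head? = some x) (hy : s.getLast? = some y) (hw : w ∉ s)
    (hzx : z ≠ x) (hzy : z ≠ y) (hzw : z ≠ w) : G.Adj x z ∨ G.Adj y z ∨ G.Adj w z := by
  have hwx : w ≠ x := fun h => hw (h ▸ List.mem_of_mem_head? hx)
  have hwy : w ≠ y := fun h => hw (h ▸ List.mem_of_mem_getLast? hy)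
  rcases h4.adj_of_four (hs.head_ne_getLast hconn hw hx hy) hwx.symm hzx.symm hwy.symm hzy.symm
    hzw.symm with h | h | h | h | h | h
  · exact absurd h (hs.not_adj_head_getLast hconn hw hx hy)
  · exact absurd h.symm (hs.not_adj_head hw hx)
  · exact Or.inl h
  · exact absurd h.symm (hs.not_adj_getLast hw hy)
  · exact Or.inr (Or.inl h)
  · exact Or.inr (Or.inr h)

lemma adj_of_notMem (h4 : G.IndepSetFree 4) (hconn : G.Connected) (hs : IsLongestPathList G s)
    (hx : s.head? = some x) (hy : s.getLast? = some y) (hw : w ∉ s) (hw' : w' ∉ s)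
    (hne : w ≠ w') : G.Adj w w' := by
  rcases hs.adj_or_adj_or_adj h4 hconn hx hy hw (z := w')
    (fun h => hw' (h ▸ List.mem_of_mem_head? hx)) (fun h => hw' (h ▸ List.mem_of_mem_getLast? hy))
    hne.symm with h | h | h
  · exact absurd h.symm (hs.not_adj_head hw' hx)
  · exact absurd h.symm (hs.not_adj_getLast hw' hy)
  · exact h

lemma adj_head_of_adj_head_succ (h4 : G.IndepSetFree 4) (hconn : G.Connected)
    (hs : IsLongestPathList G s) (hx : s.head? = some x) (hy : s.getLast? = some y) (hw : w ∉ s)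
    (hsplit : s = l₁ ++ u :: u' :: l₂) (hl₁ : l₁ ≠ []) (hxu' : G.Adj x u') : G.Adj x u := by
  have hux : u ≠ x := hs.1.1.ne_of_mem_of_head?_eq (l₂ := u :: u' :: l₂) hsplit hl₁ hx (by simp)
  have huy : u ≠ y := hs.1.1.ne_of_mem_of_getLast?_eq (l₁ := l₁ ++ [u]) (l₂ := u' :: l₂)
    (by simp [hsplit]) (by simp) hy (by simp)
  have huw : u ≠ w := fun h => hw (h ▸ by simp [hsplit])
  rcases hs.adj_or_adj_or_adj h4 hconn hx hy hw hux huy huw with h | h | h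
  · exact h
  · exact absurd h.symm (hs.not_adj_getLast_of_adj_head hconn hsplit hx hy hxu' hw)
  · exact absurd h (hs.not_adj_of_adj_head hsplit hx hxu' hw)

lemma not_adj_head_of_not_adj_head (h4 : G.IndepSetFree 4) (hconn : G.Connected)
    (hs : IsLongestPathList G s) (hx : s.head? = some x) (hy : s.getLast? = some y) (hw : w ∉ s)
    (hsplit : s = l₁ ++ u :: l₂) (hl₁ : l₁ ≠ []) (hxu : ¬ G.Adj x u) :
    ∀ z ∈ l₂, ¬ G.Adj x z := by
  induction l₂ generalizing l₁ u with
  | nil => simp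
  | cons a l₂ ih =>
    have hxa : ¬ G.Adj x a := fun h =>
      hxu (hs.adj_head_of_adj_head_succ h4 hconn hx hy hw hsplit hl₁ h)
    intro z hz
    rcases List.mem_cons.1 hz with rfl | hz
    · exact hxa
    · exact ih (l₁ := l₁ ++ [u]) (by simp [hsplit]) (by simp) hxa z hz

lemma not_adj_head_of_adj (h4 : G.IndepSetFree 4) (hconn : G.Connected)
    (hs : IsLongestPathList G s) (hx : s.head? = some x) (hy : s.getLast? = some y) (hw : w ∉ s)
    (hsplit : s = l₁ ++ u :: l₂) (hwu : G.Adj w u) : ∀ z ∈ l₂, ¬ G.Adj x z := by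
  cases l₂ with
  | nil => simp
  | cons u' l₂ =>
    have hxu' : ¬ G.Adj x u' := fun h => hs.not_adj_of_adj_head hsplit hx h hw hwu
    intro z hz
    rcases List.mem_cons.1 hz with rfl | hz
    · exact hxu'
    · exact hs.not_adj_head_of_not_adj_head h4 hconn hx hy hw (l₁ := l₁ ++ [u])
        (by simp [hsplit]) (by simp) hxu' z hz

lemma not_adj_getLast_of_adj (h4 : G.IndepSetFree 4) (hconn : G.Connected)
    (hs : IsLongestPathList G s) (hx : s.head? = some x) (hy : s.getLast? = some y) (hw : w ∉ s)
    (hsplit : s = l₁ ++ u :: l₂) (hwu : G.Adj w u) : ∀ z ∈ l₁, ¬ G.Adj y z := fun z hz =>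
  hs.reverse.not_adj_head_of_adj h4 hconn (by simpa using hy) (by simpa using hx)
    (by simpa using hw) (l₁ := l₂.reverse) (l₂ := l₁.reverse) (by simp [hsplit]) hwu z
    (by simpa using hz)

lemma false_of_adj_of_adj (h4 : G.IndepSetFree 4) (hconn : G.Connected)
    (hs : IsLongestPathList G s) (hx : s.head? = some x) (hy : s.getLast? = some y) (hw : w ∉ s)
    (hw' : w' ∉ s) (hsplit : s = l₁ ++ u :: m ++ u' :: l₂) (hwu : G.Adj w u)
    (hw'u' : G.Adj w' u') : False := by
  rcases List.eq_nil_or_concat m with rfl | ⟨m, z, rfl⟩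
  · replace hsplit : s = l₁ ++ u :: u' :: l₂ := by simpa using hsplit
    subst hsplit
    by_cases hww' : w = w'
    · subst hww'
      exact List.cons_ne_nil _ _ <| hs.eq_nil_of_isPathList (L := [w])
        ⟨by simp, by simp⟩ (by simpa using hwu.symm) (by simpa using hw'u') (by simpa using hw)
    · exact List.cons_ne_nil _ _ <| hs.eq_nil_of_isPathList (L := [w, w'])
        ⟨by simpa using hww', by simpa using hs.adj_of_notMem h4 hconn hx hy hw hw' hww'⟩
        (by simpa using hwu.symm) (by simpa using hw'u') (by simp at hw hw' ⊢; tauto)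
  · simp only [List.concat_eq_append] at hsplit
    have hxz := hs.not_adj_head_of_adj h4 hconn hx hy hw (l₁ := l₁) (l₂ := m ++ z :: u' :: l₂)
      (by simp [hsplit]) hwu z (by simp)
    have hyz := hs.not_adj_getLast_of_adj h4 hconn hx hy hw' (l₁ := l₁ ++ u :: m ++ [z])
      (l₂ := l₂) (by simp [hsplit]) hw'u' z (by simp)
    have hsplit' : s = (l₁ ++ u :: m) ++ z :: u' :: l₂ := by simp [hsplit]
    have hw'z : ¬ G.Adj w' z := fun h => List.cons_ne_nil _ _ <|
      (hsplit' ▸ hs).eq_nil_of_isPathList (L := [w']) ⟨by simp, by simp⟩ (by simpa using h.symm)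
        (by simpa using hw'u') (by simpa [hsplit'] using hw')
    have hzx : z ≠ x := hs.1.1.ne_of_mem_of_head?_eq (l₁ := l₁ ++ [u])
      (l₂ := m ++ z :: u' :: l₂) (by simp [hsplit]) (by simp) hx (by simp)
    have hzy : z ≠ y := hs.1.1.ne_of_mem_of_getLast?_eq (l₁ := l₁ ++ u :: m ++ [z])
      (l₂ := u' :: l₂) (by simp [hsplit]) (by simp) hy (by simp)
    have hzw' : z ≠ w' := fun h => hw' (h ▸ by simp [hsplit])
    rcases hs.adj_or_adj_or_adj h4 hconn hx hy hw' hzx hzy hzw' with h | h | h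
    exacts [hxz h, hyz h, hw'z h]

lemma eq_of_adj_of_adj (h4 : G.IndepSetFree 4) (hconn : G.Connected)
    (hs : IsLongestPathList G s) (hx : s.head? = some x) (hy : s.getLast? = some y) (hw : w ∉ s)
    (hw' : w' ∉ s) (hu : u ∈ s) (hu' : u' ∈ s) (hwu : G.Adj w u) (hw'u' : G.Adj w' u') :
    u = u' := by
  by_contra hne
  obtain ⟨l₁, l₂, hsplit⟩ := List.append_of_mem hu
  rw [hsplit, List.mem_append, List.mem_cons] at hu'
  rcases hu' with hu' | rfl | hu'
  · obtain ⟨l₀, m, rfl⟩ := List.append_of_mem hu'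
    exact hs.false_of_adj_of_adj h4 hconn hx hy hw' hw (l₁ := l₀) (m := m) (l₂ := l₂)
      (by simp [hsplit]) hw'u' hwu
  · exact hne rfl
  · obtain ⟨m, l₃, rfl⟩ := List.append_of_mem hu'
    exact hs.false_of_adj_of_adj h4 hconn hx hy hw hw' (l₁ := l₁) (m := m) (l₂ := l₃)
      (by simp [hsplit]) hwu hw'u'

lemma length_lt_of_forall_notMem (h4 : G.IndepSetFree 4) (hconn : G.Connected)
    (hs : IsLongestPathList G s) (hx : s.head? = some x) (hy : s.getLast? = some y) (hw : w ∉ s)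
    (hl : IsPathList G l) (hls : ∀ a ∈ l, a ∉ s) : l.length < s.length := by
  classical
  obtain ⟨a, ha, b, hb, hab⟩ :=
    hconn.exists_adj_notMem_mem (S := {a | a ∈ s}) hw (List.mem_of_mem_head? hx)
  have hnd : (a :: l.erase a).Nodup := List.nodup_cons.2 ⟨hl.1.not_mem_erase, hl.1.erase a⟩
  have hout : ∀ c ∈ a :: l.erase a, c ∉ s := by
    simp only [List.mem_cons]
    rintro c (rfl | hc)
    exacts [ha, hls c (List.mem_of_mem_erase hc)]
  have hclique : (a :: l.erase a).Pairwise G.Adj := hnd.pairwise_of_forall_ne fun c hc d hd hcd =>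
    hs.adj_of_notMem h4 hconn hx hy (hout c hc) (hout d hd) hcd
  -- `K` is a clique, so `b` followed by `a` and the other vertices of `l` is a path
  have hlen := hs.2 (b :: a :: l.erase a)
    ⟨List.nodup_cons.2 ⟨fun h => hout b h hb, hnd⟩, hclique.isChain.cons_cons hab.symm⟩
  have := List.length_erase (a := a) (l := l)
  split_ifs at this <;> simp at hlen <;> omega

lemma exists_forall_mem (h4 : G.IndepSetFree 4) (hconn : G.Connected)
    (hs : IsLongestPathList G s) : ∃ c, ∀ t, IsLongestPathList G t → c ∈ t := by
  obtain ⟨v⟩ := hconn.nonempty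
  have hne : s ≠ [] := fun h => by simpa [h] using hs.2 [v] ⟨by simp, by simp⟩
  obtain ⟨x, hx⟩ : ∃ x, s.head? = some x := Option.ne_none_iff_exists'.1 (by simpa using hne)
  obtain ⟨y, hy⟩ : ∃ y, s.getLast? = some y := Option.ne_none_iff_exists'.1 (by simpa using hne)
  obtain ⟨c, hc, hcut, hK⟩ : ∃ c ∈ s, (∀ a ∉ s, ∀ b ∈ s, G.Adj a b → b = c) ∧
      ∀ l, IsPathList G l → (∀ a ∈ l, a ∉ s) → l.length < s.length := by
    by_cases hall : ∀ w, w ∈ s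
    · refine ⟨x, List.mem_of_mem_head? hx, fun a ha => absurd (hall a) ha, fun l _ hls => ?_⟩
      rw [List.eq_nil_iff_forall_not_mem.2 fun a ha => hls a ha (hall a)]
      exact List.length_pos_of_ne_nil hne
    · obtain ⟨w, hw⟩ := not_forall.1 hall
      obtain ⟨a, ha, c, hc, hac⟩ :=
        hconn.exists_adj_notMem_mem (S := {a | a ∈ s}) hw (List.mem_of_mem_head? hx)
      exact ⟨c, hc, fun a' ha' b hb hab => hs.eq_of_adj_of_adj h4 hconn hx hy ha' ha hb hc hab hac,
        fun l hl hls => hs.length_lt_of_forall_notMem h4 hconn hx hy hw hl hls⟩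
  exact ⟨c, fun t ht => hs.mem_of_forall_adj_eq hc hcut hK ht⟩

end IsLongestPathList

end

lemma IsLongestPath.isLongestPathList_support {V : Type} {G : SimpleGraph V} {a b : V}
    {p : G.Walk a b} (hp : IsLongestPath G p) : IsLongestPathList G p.support := by
  refine ⟨⟨hp.1.support_nodup, p.isChain_adj_support⟩, fun l hl => ?_⟩
  by_cases hne : l = []
  · simp [hne]
  · have hq := hp.2 _ _ (Walk.ofSupport l hne hl.2)
      (by rw [Walk.isPath_def, Walk.support_ofSupport]; exact hl.1)
    rw [Walk.length_ofSupport] at hq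
    rw [Walk.length_support]
    omega

/-- Every connected graph with independence number at most `3` has a Gallai vertex:
a vertex lying on every longest path. -/
theorem gallai_vertex_of_alpha_le_three
    {V : Type} [Fintype V] (G : SimpleGraph V)
    (hconn : G.Connected)
    (hα : ∀ s : Finset V, (∀ a ∈ s, ∀ b ∈ s, a ≠ b → ¬ G.Adj a b) → s.card ≤ 3) :
    ∃ u : V, ∀ (a b : V) (p : G.Walk a b), IsLongestPath G p → u ∈ p.support := by
  obtain ⟨s, hs⟩ := exists_isLongestPathList G
  obtain ⟨c, hc⟩ := hs.exists_forall_mem (indepSetFree_of_card_le hα) hconn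
  exact ⟨c, fun _ _ _ hp => hc _ hp.isLongestPathList_support⟩
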